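/- Let P : S(H) × S(H) → ℝ≥0 be any function on pairs of density operators satisfying: (A1, triangle inequality) P(ρ,σ) ≤ P(ρ,ω) + P(ω,σ) for all ω; (A2, symmetry) P(ρ,σ) = P(σ,ρ); (A3, operational bound) whenever ρ = (1−ε)σ + εσ′ for some ε ∈ [0,1] and density operator σ′, one has P(ρ,σ) ≤ ε. Then P(ρ,σ) ≤ ‖ρ − σ‖₁ for all density operators ρ, σ. -/

import Mathlib

/-!
Split ρ - σ = Δ₊ - Δ₋ into positive and negative parts. Since ρ - σ is traceless,
tr Δ₊ = tr Δ₋ = t with 2t = ‖ρ - σ‖₁, and for t > 0 the state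
ω = (ρ + Δ₋)/(1 + t) = (σ + Δ₊)/(1 + t) is simultaneously a mixture of ρ with Δ₋/t and of σ
with Δ₊/t, both with weight ε = t/(1 + t) ≤ t. The triangle inequality through ω, symmetry and
the operational bound then give P(ρ, σ) ≤ 2ε ≤ ‖ρ - σ‖₁.
-/

open Matrix BigOperators ComplexOrder

variable {n : Type*} [Fintype n] [DecidableEq n]

/-- Trace norm (Schatten 1-norm) of a matrix. -/
noncomputable def traceNorm (A : Matrix n n ℂ) : ℝ :=
  (((Matrix.posSemidef_conjTranspose_mul_self A).1.eigenvectorUnitary.1 *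
      diagonal (((↑) : ℝ → ℂ) ∘ (√·) ∘ (Matrix.posSemidef_conjTranspose_mul_self A).1.eigenvalues) *
      (star (Matrix.posSemidef_conjTranspose_mul_self A).1.eigenvectorUnitary : Matrix n n ℂ)).trace).re

/-- A density operator: positive semidefinite with trace 1. -/
def IsDensity (ρ : Matrix n n ℂ) : Prop := ρ.PosSemidef ∧ ρ.trace = 1

lemma traceNorm_eq_re_trace_cfc_sqrt (A : Matrix n n ℂ) :
    traceNorm A = (cfc Real.sqrt (Aᴴ * A)).trace.re := by
  rw [(posSemidef_conjTranspose_mul_self A).1.cfc_eq]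
  rfl

namespace Matrix

lemma IsHermitian.trace_cfc {𝕜 : Type*} [RCLike 𝕜] {A : Matrix n n 𝕜} (hA : A.IsHermitian)
    (f : ℝ → ℝ) : (cfc f A).trace = ∑ i, (f (hA.eigenvalues i) : 𝕜) := by
  rw [hA.cfc_eq, IsHermitian.cfc, Unitary.conjStarAlgAut_apply, trace_mul_cycle,
    Unitary.coe_star_mul_self, one_mul, trace_diagonal]
  rfl

open scoped MatrixOrder in
lemma posSemidef_cfc {𝕜 : Type*} [RCLike 𝕜] (A : Matrix n n 𝕜)
    {f : ℝ → ℝ} (hf : ∀ x, 0 ≤ f x) : (cfc f A).PosSemidef :=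
  (cfc_nonneg fun x _ => hf x).posSemidef

lemma IsHermitian.traceNorm_eq_re_trace_cfc_abs {A : Matrix n n ℂ} (hA : A.IsHermitian) :
    traceNorm A = (cfc (|·| : ℝ → ℝ) A).trace.re := by
  have hsq : Aᴴ * A = cfc (· ^ 2 : ℝ → ℝ) A := by
    rw [cfc_pow_id A 2 hA.isSelfAdjoint, hA.eq, sq]
  rw [traceNorm_eq_re_trace_cfc_sqrt, hsq, ← cfc_comp' Real.sqrt (· ^ 2) A]
  simp only [Real.sqrt_sq_eq_abs]

lemma IsHermitian.traceNorm_eq_sum_abs_eigenvalues {A : Matrix n n ℂ} (hA : A.IsHermitian) :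
    traceNorm A = ∑ i, |hA.eigenvalues i| := by
  rw [hA.traceNorm_eq_re_trace_cfc_abs, hA.trace_cfc]
  norm_cast

lemma IsHermitian.exists_posSemidef_sub_eq {A : Matrix n n ℂ} (hA : A.IsHermitian) :
    ∃ P N : Matrix n n ℂ, P.PosSemidef ∧ N.PosSemidef ∧ P - N = A ∧
      P.trace + N.trace = traceNorm A := by
  refine ⟨cfc (fun x : ℝ => max x 0) A, cfc (fun x : ℝ => max (-x) 0) A,
    posSemidef_cfc A fun _ => le_max_right _ _, posSemidef_cfc A fun _ => le_max_right _ _, ?_, ?_⟩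
  · rw [← cfc_sub .., ← cfc_id' ℝ A]
    simp only [max_zero_sub_max_neg_zero_eq_self, cfc_id' ℝ A]
  · rw [← trace_add, ← cfc_add .., hA.traceNorm_eq_sum_abs_eigenvalues, hA.trace_cfc,
      Complex.ofReal_sum]
    simp only [max_zero_add_max_neg_zero_eq_abs_self]
    rfl

omit [DecidableEq n] in
lemma PosSemidef.isDensity_inv_smul {N : Matrix n n ℂ} (hN : N.PosSemidef) {t : ℝ}
    (ht : 0 < t) (hNt : N.trace = t) : IsDensity (t⁻¹ • N) := by
  refine ⟨hN.smul (inv_nonneg.2 ht.le), ?_⟩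
  rw [trace_smul, hNt, Complex.real_smul, Complex.ofReal_inv, inv_mul_cancel₀]
  exact_mod_cast ht.ne'

end Matrix

omit [DecidableEq n] in
lemma convex_setOf_isDensity : Convex ℝ {ρ : Matrix n n ℂ | IsDensity ρ} := by
  rintro ρ ⟨hρ, hρ1⟩ σ ⟨hσ, hσ1⟩ a b ha hb hab
  refine ⟨(hρ.smul ha).add (hσ.smul hb), ?_⟩
  rw [trace_add, trace_smul, trace_smul, hρ1, hσ1, ← add_smul, hab, one_smul]

lemma IsDensity.exists_common_mixture {ρ σ : Matrix n n ℂ} (hρ : IsDensity ρ) (hσ : IsDensity σ) :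
    ∃ ε ∈ Set.Icc (0 : ℝ) 1, 2 * ε ≤ traceNorm (ρ - σ) ∧ ∃ ω ρ' σ' : Matrix n n ℂ,
      IsDensity ω ∧ IsDensity ρ' ∧ IsDensity σ' ∧
      ω = (1 - ε) • ρ + ε • ρ' ∧ ω = (1 - ε) • σ + ε • σ' := by
  obtain ⟨P, N, hP, hN, hPN, htr⟩ := (hρ.1.1.sub hσ.1.1).exists_posSemidef_sub_eq
  set t := traceNorm (ρ - σ) / 2 with ht_def
  have hPt : P.trace = t ∧ N.trace = t := by
    have h0 : P.trace - N.trace = 0 := by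
      rw [← trace_sub, hPN, trace_sub, hρ.2, hσ.2, sub_self]
    have ht : (t : ℂ) = traceNorm (ρ - σ) / 2 := by push_cast [t]; rfl
    exact ⟨by linear_combination (htr + h0) / 2 - ht, by linear_combination (htr - h0) / 2 - ht⟩
  rcases (Complex.zero_le_real.1 (hPt.2 ▸ hN.trace_nonneg)).eq_or_lt with ht0 | ht0
  · have hP0 : P = 0 := hP.trace_eq_zero_iff.1 (by rw [hPt.1, ← ht0, Complex.ofReal_zero])
    have hN0 : N = 0 := hN.trace_eq_zero_iff.1 (by rw [hPt.2, ← ht0, Complex.ofReal_zero])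
    have hρσ : ρ = σ := by rw [← sub_eq_zero, ← hPN, hP0, hN0, sub_zero]
    exact ⟨0, by simp, by linarith, ρ, ρ, ρ, hρ, hρ, hρ, by simp, by simp [hρσ]⟩
  set ε := t / (1 + t) with hε_def
  have hεt : ε * t⁻¹ = 1 - ε := by rw [hε_def]; field_simp; ring
  have hmix (X Y : Matrix n n ℂ) : (1 - ε) • X + ε • (t⁻¹ • Y) = (1 - ε) • (X + Y) := by
    rw [smul_smul, hεt, smul_add]
  have hε1 : ε ∈ Set.Icc (0 : ℝ) 1 :=
    ⟨by positivity, div_le_one_of_le₀ (by linarith) (by positivity)⟩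
  have hρ' := hN.isDensity_inv_smul ht0 hPt.2
  refine ⟨ε, hε1, ?_, _, _, _, convex_setOf_isDensity hρ hρ' (sub_nonneg.2 hε1.2) hε1.1
    (sub_add_cancel 1 ε), hρ', hP.isDensity_inv_smul ht0 hPt.1, rfl, ?_⟩
  · linarith [div_le_self ht0.le (by linarith : (1 : ℝ) ≤ 1 + t)]
  · rw [hmix, hmix, sub_eq_sub_iff_add_eq_add.1 hPN.symm, add_comm P]

theorem axioms_imply_traceNorm_bound_general
    (P : Matrix n n ℂ → Matrix n n ℂ → ℝ)
    (hA1 : ∀ ρ σ ω, IsDensity ρ → IsDensity σ → IsDensity ω →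
      P ρ σ ≤ P ρ ω + P ω σ)
    (hA2 : ∀ ρ σ, IsDensity ρ → IsDensity σ → P ρ σ = P σ ρ)
    (hA3 : ∀ ρ σ σ' : Matrix n n ℂ, ∀ ε : ℝ, IsDensity ρ → IsDensity σ → IsDensity σ' →
      ε ∈ Set.Icc (0:ℝ) 1 → ρ = (1 - ε) • σ + ε • σ' → P ρ σ ≤ ε) :
    ∀ ρ σ, IsDensity ρ → IsDensity σ → P ρ σ ≤ traceNorm (ρ - σ) := by
  intro ρ σ hρ hσ
  obtain ⟨ε, hε, hε_le, ω, ρ', σ', hω, hρ', hσ', hωρ, hωσ⟩ := hρ.exists_common_mixture hσ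
  calc P ρ σ ≤ P ρ ω + P ω σ := hA1 ρ σ ω hρ hσ hω
    _ = P ω ρ + P ω σ := by rw [hA2 ρ ω hρ hω]
    _ ≤ ε + ε := add_le_add (hA3 ω ρ ρ' ε hω hρ hρ' hε hωρ) (hA3 ω σ σ' ε hω hσ hσ' hε hωσ)
    _ ≤ traceNorm (ρ - σ) := by linarith

theorem axioms_imply_traceNorm_bound
    (P : Matrix n n ℂ → Matrix n n ℂ → ℝ)
    (hnonneg : ∀ ρ σ, IsDensity ρ → IsDensity σ → 0 ≤ P ρ σ)
    (hA1 : ∀ ρ σ ω, IsDensity ρ → IsDensity σ → IsDensity ω →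
      P ρ σ ≤ P ρ ω + P ω σ)
    (hA2 : ∀ ρ σ, IsDensity ρ → IsDensity σ → P ρ σ = P σ ρ)
    (hA3 : ∀ ρ σ σ' : Matrix n n ℂ, ∀ ε : ℝ, IsDensity ρ → IsDensity σ → IsDensity σ' →
      ε ∈ Set.Icc (0:ℝ) 1 → ρ = (1 - ε) • σ + ε • σ' → P ρ σ ≤ ε) :
    ∀ ρ σ, IsDensity ρ → IsDensity σ → P ρ σ ≤ traceNorm (ρ - σ) :=
  axioms_imply_traceNorm_bound_general P hA1 hA2 hA3
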